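/- Let α_1, α_2, α_3 be pairwise distinct reals and let B be the 3×3 upper triangular matrix with diagonal (α_1, α_2, α_3) and strictly-upper entries α_{12}, α_{13}, α_{23}. Then for every δ ≥ 0 the (1,3) entry of e^{Bδ} equals α_{13}(e^{α_1 δ} − e^{α_3 δ})/(α_1 − α_3) + α_{12} α_{23} [ e^{α_1 δ}/((α_1 − α_2)(α_1 − α_3)) + e^{α_2 δ}/((α_2 − α_1)(α_2 − α_3)) + e^{α_3 δ}/((α_3 − α_1)(α_3 − α_2)) ]. -/

import Mathlib

open Matrix

set_option maxHeartbeats 1600000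

theorem exp_upper_triangular_three_by_three_entry (α₁ α₂ α₃ α₁₂ α₁₃ α₂₃ : ℝ)
    (h₁₂ : α₁ ≠ α₂) (h₁₃ : α₁ ≠ α₃) (h₂₃ : α₂ ≠ α₃) (δ : ℝ) (hδ : 0 ≤ δ) :
    (NormedSpace.exp (δ • !![α₁, α₁₂, α₁₃; 0, α₂, α₂₃; 0, 0, α₃])) 0 2 =
      α₁₃ * (Real.exp (α₁ * δ) - Real.exp (α₃ * δ)) / (α₁ - α₃) +
        α₁₂ * α₂₃ *
          (Real.exp (α₁ * δ) / ((α₁ - α₂) * (α₁ - α₃)) +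
            Real.exp (α₂ * δ) / ((α₂ - α₁) * (α₂ - α₃)) +
            Real.exp (α₃ * δ) / ((α₃ - α₁) * (α₃ - α₂)) ) := by
  have h21 : α₂ - α₁ ≠ 0 := sub_ne_zero.mpr (Ne.symm h₁₂)
  have h31 : α₃ - α₁ ≠ 0 := sub_ne_zero.mpr (Ne.symm h₁₃)
  have h32 : α₃ - α₂ ≠ 0 := sub_ne_zero.mpr (Ne.symm h₂₃)
  have h12 : α₁ - α₂ ≠ 0 := sub_ne_zero.mpr h₁₂
  have h13 : α₁ - α₃ ≠ 0 := sub_ne_zero.mpr h₁₃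
  have h23 : α₂ - α₃ ≠ 0 := sub_ne_zero.mpr h₂₃
  set a : ℝ := α₁₂ / (α₂ - α₁) with ha
  set c : ℝ := α₂₃ / (α₃ - α₂) with hc
  set b : ℝ := (α₁₂ * c + α₁₃) / (α₃ - α₁) with hb
  set P : Matrix (Fin 3) (Fin 3) ℝ := !![1, a, b; 0, 1, c; 0, 0, 1] with hP
  set Q : Matrix (Fin 3) (Fin 3) ℝ := !![1, -a, a * c - b; 0, 1, -c; 0, 0, 1] with hQ
  have hPQ : P * Q = 1 := by
    rw [hP, hQ, Matrix.mul_fin_three, Matrix.one_fin_three]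
    ext i j
    fin_cases i <;> fin_cases j <;> simp [Matrix.vecHead, Matrix.vecTail]
    all_goals ring
  have hQinv : P⁻¹ = Q := Matrix.inv_eq_right_inv hPQ
  have hU : IsUnit P := by
    rw [Matrix.isUnit_iff_isUnit_det]
    have : P.det = 1 := by simp [hP, Matrix.det_fin_three, Matrix.vecHead, Matrix.vecTail]
    simp [this]
  have key : δ • !![α₁, α₁₂, α₁₃; 0, α₂, α₂₃; 0, 0, α₃] =
      P * Matrix.diagonal ![δ * α₁, δ * α₂, δ * α₃] * P⁻¹ := by
    rw [hQinv]
    have hD : Matrix.diagonal ![δ * α₁, δ * α₂, δ * α₃] =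
        !![δ * α₁, 0, 0; 0, δ * α₂, 0; 0, 0, δ * α₃] := by
      ext i j
      fin_cases i <;> fin_cases j <;> simp [Matrix.vecHead, Matrix.vecTail]
    rw [hP, hQ, hD, Matrix.mul_fin_three, Matrix.mul_fin_three]
    ext i j
    fin_cases i <;> fin_cases j <;> simp [Matrix.vecHead, Matrix.vecTail, ha, hb, hc]
    all_goals field_simp
    all_goals ring
  have hvec : (fun i => NormedSpace.exp ((![δ * α₁, δ * α₂, δ * α₃] : Fin 3 → ℝ) i)) =
      ![Real.exp (α₁ * δ), Real.exp (α₂ * δ), Real.exp (α₃ * δ)] := by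
    funext i
    fin_cases i <;> simp [← Real.exp_eq_exp_ℝ, mul_comm]
  have hdiag : NormedSpace.exp (Matrix.diagonal ![δ * α₁, δ * α₂, δ * α₃]) =
      Matrix.diagonal ![Real.exp (α₁ * δ), Real.exp (α₂ * δ), Real.exp (α₃ * δ)] := by
    rw [Matrix.exp_diagonal, Pi.exp_def, hvec]
  rw [key, Matrix.exp_conj P _ hU, hdiag, hQinv]
  have hD2 : Matrix.diagonal ![Real.exp (α₁ * δ), Real.exp (α₂ * δ), Real.exp (α₃ * δ)] =
      !![Real.exp (α₁ * δ), 0, 0; 0, Real.exp (α₂ * δ), 0; 0, 0, Real.exp (α₃ * δ)] := by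
    ext i j
    fin_cases i <;> fin_cases j <;> simp [Matrix.vecHead, Matrix.vecTail]
  rw [hP, hQ, hD2, Matrix.mul_fin_three, Matrix.mul_fin_three]
  simp only [Matrix.cons_val', Matrix.cons_val_zero, Matrix.cons_val_one, Matrix.head_cons,
    Matrix.empty_val', Matrix.cons_val_fin_one, Matrix.head_fin_const, Matrix.of_apply,
    Matrix.cons_val_two, Matrix.tail_cons]
  rw [ha, hb, hc]
  field_simp
  ring
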